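/- arXiv:2208.10201 — 2 statements merged into one kernel-verified Lean document; each statement's English description precedes it below -/
import Mathlib

section
/- Let T, T^δ : X → Y be bounded linear operators between Hilbert spaces, y ∈ ran(T), and y^δ ∈ Y satisfying ‖Tx† - T^δx†‖ ≤ Cδ and ‖y - y^δ‖ ≤ C'δ, where x† is the minimum-norm solution of Tx = y. If additionally ‖T - T^δ‖ ≤ Cδ in operator norm, then as δ → 0 with α = α(δ) → 0 and δ²/α(δ) → 0, the Tikhonov-regularized solutions x_α^δ = argmin_x ‖T^δx - y^δ‖² + α‖x‖² converge weakly to x† along a subsequence, and the limit of every weakly convergent subsequence is x†; hence x_α^δ → x† weakly, and in fact in norm. -/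
open MeasureTheory Filter RealInnerProductSpace

/-- Gradient of a scalar field on `ℝ^d`. -/
noncomputable def grad {d : ℕ} (f : EuclideanSpace ℝ (Fin d) → ℝ)
    (x : EuclideanSpace ℝ (Fin d)) : EuclideanSpace ℝ (Fin d) := gradient f x

/-- Divergence of a vector field on `ℝ^d` (trace of the Fréchet derivative). -/
noncomputable def divg {d : ℕ} (V : EuclideanSpace ℝ (Fin d) → EuclideanSpace ℝ (Fin d))
    (x : EuclideanSpace ℝ (Fin d)) : ℝ :=
  LinearMap.trace ℝ _ (fderiv ℝ V x : EuclideanSpace ℝ (Fin d) →ₗ[ℝ] EuclideanSpace ℝ (Fin d))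

/-- Laplacian of a scalar field. -/
noncomputable def lap {d : ℕ} (f : EuclideanSpace ℝ (Fin d) → ℝ)
    (x : EuclideanSpace ℝ (Fin d)) : ℝ := divg (grad f) x

/-- `ℤ^d`-periodicity: functions on the torus `𝕋^d` are identified with periodic
functions on `ℝ^d`. -/
def IsPeriodic {d : ℕ} (f : EuclideanSpace ℝ (Fin d) → ℝ) : Prop :=
  ∀ (x : EuclideanSpace ℝ (Fin d)) (k : Fin d → ℤ),
    f (x + (EuclideanSpace.equiv (Fin d) ℝ).symm (fun i => (k i : ℝ))) = f x

/-- Fundamental domain of the torus `𝕋^d = ℝ^d / ℤ^d`. -/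
noncomputable def Box (d : ℕ) : Set (EuclideanSpace ℝ (Fin d)) :=
  {x | ∀ i, x i ∈ Set.Icc (0:ℝ) 1}

/-!
Comparing the Tikhonov functional at `x_α^δ` with its value at `x†` gives
`‖x_α^δ‖² ≤ ‖x†‖² + O(δ²/α)` and `‖T^δ x_α^δ - y^δ‖² = O(δ² + α)`; hence the `x_α^δ` are bounded
and `T x_α^δ → y`. Instead of extracting weakly convergent subsequences, use that the
minimum-norm solution is orthogonal to `ker T`, i.e. lies in the closure of `ran T*`: along
`T* w` we have `⟪x_α^δ, T* w⟫ = ⟪T x_α^δ, w⟫ → ⟪x†, T* w⟫`, and boundedness passes this to the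
closure, so `⟪x_α^δ, x†⟫ → ‖x†‖²`. Then
`‖x_α^δ - x†‖² = ‖x_α^δ‖² - 2⟪x_α^δ, x†⟫ + ‖x†‖²` has nonpositive upper limit.
-/

open Topology

section Hilbert

variable {X Y : Type*} [NormedAddCommGroup X] [InnerProductSpace ℝ X]
  [NormedAddCommGroup Y] [InnerProductSpace ℝ Y]

theorem tendsto_of_tendsto_inner_of_norm_sq_le {ι : Type*} {l : Filter ι} {x : ι → X} {u : X}
    {r : ι → ℝ} (hinner : Tendsto (fun i => ⟪x i, u⟫) l (𝓝 ⟪u, u⟫))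
    (hle : ∀ i, ‖x i‖ ^ 2 ≤ r i) (hr : Tendsto r l (𝓝 (‖u‖ ^ 2))) :
    Tendsto x l (𝓝 u) := by
  have hbound : Tendsto (fun i => r i - 2 * ⟪x i, u⟫ + ‖u‖ ^ 2) l (𝓝 0) := by
    convert (hr.sub (hinner.const_mul 2)).add_const (‖u‖ ^ 2) using 2
    rw [real_inner_self_eq_norm_sq]; ring
  have hsq : Tendsto (fun i => ‖x i - u‖ ^ 2) l (𝓝 0) :=
    squeeze_zero (fun _ => sq_nonneg _)
      (fun i => by rw [norm_sub_sq_real]; linarith [hle i]) hbound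
  rw [tendsto_iff_norm_sub_tendsto_zero]
  simpa using hsq.sqrt

theorem tendsto_map_of_tendsto_perturbed_residual {ι : Type*} {l : Filter ι} {T : X →L[ℝ] Y}
    {S : ι → X →L[ℝ] Y} {x : ι → X} {b : ι → Y} {y : Y} (hbdd : ∃ M, ∀ i, ‖x i‖ ≤ M)
    (hS : Tendsto (fun i => ‖T - S i‖) l (𝓝 0))
    (hres : Tendsto (fun i => ‖S i (x i) - b i‖) l (𝓝 0)) (hb : Tendsto b l (𝓝 y)) :
    Tendsto (fun i => T (x i)) l (𝓝 y) := by
  obtain ⟨M, hM⟩ := hbdd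
  rw [tendsto_iff_norm_sub_tendsto_zero] at hb ⊢
  have hbound (i : ι) : ‖T (x i) - y‖ ≤ ‖T - S i‖ * M + ‖S i (x i) - b i‖ + ‖b i - y‖ :=
    calc ‖T (x i) - y‖ = ‖(T - S i) (x i) + (S i (x i) - b i) + (b i - y)‖ := by
          rw [sub_apply]; abel_nf
      _ ≤ ‖(T - S i) (x i)‖ + ‖S i (x i) - b i‖ + ‖b i - y‖ := norm_add₃_le
      _ ≤ ‖T - S i‖ * M + ‖S i (x i) - b i‖ + ‖b i - y‖ := by
          gcongr
          exact ((T - S i).le_opNorm _).trans (by gcongr; exact hM i)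
  refine squeeze_zero (fun _ => norm_nonneg _) hbound ?_
  simpa using ((hS.mul_const M).add hres).add hb

namespace ContinuousLinearMap

theorem mem_orthogonal_ker_of_forall_norm_le {T : X →L[ℝ] Y} {u : X}
    (hmin : ∀ x, T x = T u → ‖u‖ ≤ ‖x‖) : u ∈ T.kerᗮ := by
  have hinf : ‖u - 0‖ = ⨅ w : (T.ker : Set X), ‖u - w‖ := by
    refine le_antisymm (le_ciInf fun w => ?_) ?_
    · rw [sub_zero]
      exact hmin _ (by rw [map_sub, sub_eq_self]; exact w.2)
    · exact ciInf_le (f := fun w : (T.ker : Set X) => ‖u - w‖)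
        ⟨0, Set.forall_mem_range.2 fun _ => norm_nonneg _⟩ ⟨0, T.ker.zero_mem⟩
  rw [Submodule.mem_orthogonal']
  simpa using (T.ker.norm_eq_iInf_iff_real_inner_eq_zero T.ker.zero_mem).1 hinf

variable [CompleteSpace X] [CompleteSpace Y]

theorem tendsto_inner_of_mem_orthogonal_ker {ι : Type*} {l : Filter ι} {T : X →L[ℝ] Y}
    {x : ι → X} {u v : X} (hbdd : ∃ M, ∀ i, ‖x i‖ ≤ M)
    (hT : Tendsto (fun i => T (x i)) l (𝓝 (T u))) (hv : v ∈ T.kerᗮ) :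
    Tendsto (fun i => ⟪x i, v⟫) l (𝓝 ⟪u, v⟫) := by
  have hequi : Equicontinuous fun i => ⇑(innerSL ℝ (x i)) :=
    (NormedSpace.equicontinuous_TFAE fun i => innerSL ℝ (x i)).out 5 1 |>.1
      (by simpa only [innerSL_apply_norm] using hbdd)
  have hclosed : IsClosed {v | Tendsto (fun i => ⟪x i, v⟫) l (𝓝 ⟪u, v⟫)} :=
    hequi.isClosed_setOfPred_tendsto (innerSL ℝ u).continuous
  have hrange :
      ((adjoint T).range : Set X) ⊆ {v | Tendsto (fun i => ⟪x i, v⟫) l (𝓝 ⟪u, v⟫)} := by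
    rintro _ ⟨w, rfl⟩
    simpa only [Set.mem_ofPred_eq, coe_coe, adjoint_inner_right]
      using hT.inner (𝕜 := ℝ) (tendsto_const_nhds (x := w))
  rw [orthogonal_ker, ← SetLike.mem_coe, Submodule.topologicalClosure_coe] at hv
  exact hclosed.closure_subset_iff.2 hrange hv

end ContinuousLinearMap

noncomputable def tikhonovFunctional (A : X →L[ℝ] Y) (b : Y) (α : ℝ) (x : X) : ℝ :=
  ‖A x - b‖ ^ 2 + α * ‖x‖ ^ 2

variable {A : X →L[ℝ] Y} {b : Y} {α e : ℝ} {x z : X}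

theorem norm_sq_le_of_tikhonovFunctional_le (hα : 0 < α)
    (h : tikhonovFunctional A b α x ≤ tikhonovFunctional A b α z) (he : ‖A z - b‖ ≤ e) :
    ‖x‖ ^ 2 ≤ e ^ 2 / α + ‖z‖ ^ 2 := by
  unfold tikhonovFunctional at h
  rw [div_add' _ _ _ hα.ne', le_div_iff₀ hα]
  nlinarith [sq_nonneg ‖A x - b‖, pow_le_pow_left₀ (norm_nonneg _) he 2]

theorem residual_sq_le_of_tikhonovFunctional_le (hα : 0 ≤ α)
    (h : tikhonovFunctional A b α x ≤ tikhonovFunctional A b α z) (he : ‖A z - b‖ ≤ e) :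
    ‖A x - b‖ ^ 2 ≤ e ^ 2 + α * ‖z‖ ^ 2 := by
  unfold tikhonovFunctional at h
  nlinarith [mul_nonneg hα (sq_nonneg ‖x‖), pow_le_pow_left₀ (norm_nonneg _) he 2]

end Hilbert

theorem tikhonov_convergence_general
    {X Y : Type*} [NormedAddCommGroup X] [InnerProductSpace ℝ X] [CompleteSpace X]
    [NormedAddCommGroup Y] [InnerProductSpace ℝ Y] [CompleteSpace Y]
    (T : X →L[ℝ] Y) (y : Y) (xdag : X) (C C' : ℝ)
    (hsol : T xdag = y) (hmin : ∀ x, T x = y → ‖xdag‖ ≤ ‖x‖)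
    (δ α : ℕ → ℝ) (hαpos : ∀ n, 0 < α n)
    (hδ0 : Tendsto δ atTop (nhds 0)) (hα0 : Tendsto α atTop (nhds 0))
    (hrate : Tendsto (fun n => δ n ^ 2 / α n) atTop (nhds 0))
    (Tn : ℕ → X →L[ℝ] Y) (yn : ℕ → Y)
    (hTT : ∀ n, ‖T xdag - Tn n xdag‖ ≤ C * δ n)
    (hop : ∀ n, ‖T - Tn n‖ ≤ C * δ n)
    (hy : ∀ n, ‖y - yn n‖ ≤ C' * δ n)
    (xn : ℕ → X)
    (hxn : ∀ n x, ‖Tn n (xn n) - yn n‖ ^ 2 + α n * ‖xn n‖ ^ 2 ≤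
      ‖Tn n x - yn n‖ ^ 2 + α n * ‖x‖ ^ 2) :
    Tendsto xn atTop (nhds xdag) := by
  have hperp : xdag ∈ T.kerᗮ :=
    T.mem_orthogonal_ker_of_forall_norm_le fun x hx => hmin x (hx.trans hsol)
  have hdata (n : ℕ) : ‖Tn n xdag - yn n‖ ≤ (C + C') * δ n :=
    calc ‖Tn n xdag - yn n‖ = ‖(y - yn n) - (T xdag - Tn n xdag)‖ := by rw [hsol]; abel_nf
      _ ≤ C' * δ n + C * δ n := (norm_sub_le _ _).trans (add_le_add (hy n) (hTT n))
      _ = (C + C') * δ n := by ring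
  have hnorm (n : ℕ) : ‖xn n‖ ^ 2 ≤ ((C + C') * δ n) ^ 2 / α n + ‖xdag‖ ^ 2 :=
    norm_sq_le_of_tikhonovFunctional_le (hαpos n) (hxn n xdag) (hdata n)
  have hnorm_lim : Tendsto (fun n => ((C + C') * δ n) ^ 2 / α n + ‖xdag‖ ^ 2) atTop
      (𝓝 (‖xdag‖ ^ 2)) := by
    convert (hrate.const_mul ((C + C') ^ 2)).add_const (‖xdag‖ ^ 2) using 2 <;> ring
  have hbdd : ∃ M, ∀ n, ‖xn n‖ ≤ M := by
    obtain ⟨R, hR⟩ := hnorm_lim.bddAbove_range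
    exact ⟨√R, fun n => (le_abs_self _).trans (Real.abs_le_sqrt ((hnorm n).trans (hR ⟨n, rfl⟩)))⟩
  have hres : Tendsto (fun n => ‖Tn n (xn n) - yn n‖ ^ 2) atTop (𝓝 0) := by
    refine squeeze_zero (fun _ => sq_nonneg _)
      (fun n => residual_sq_le_of_tikhonovFunctional_le (hαpos n).le (hxn n xdag) (hdata n)) ?_
    simpa using ((hδ0.const_mul (C + C')).pow 2).add (hα0.mul_const (‖xdag‖ ^ 2))
  have hyn : Tendsto yn atTop (𝓝 y) := by
    rw [tendsto_iff_norm_sub_tendsto_zero]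
    exact squeeze_zero (fun _ => norm_nonneg _) (fun n => norm_sub_rev (yn n) y ▸ hy n)
      (by simpa using hδ0.const_mul C')
  have hTx : Tendsto (fun n => T (xn n)) atTop (𝓝 (T xdag)) :=
    hsol ▸ tendsto_map_of_tendsto_perturbed_residual hbdd
      (squeeze_zero (fun _ => norm_nonneg _) hop (by simpa using hδ0.const_mul C))
      (by simpa using hres.sqrt) hyn
  exact tendsto_of_tendsto_inner_of_norm_sq_le
    (T.tendsto_inner_of_mem_orthogonal_ker hbdd hTx hperp) hnorm hnorm_lim

/-- convergence of Tikhonov-regularized equation-error solutions to the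
minimum-norm solution `x†` as `δ → 0`, `α → 0`, `δ²/α → 0`; the convergence holds in
norm. -/
theorem tikhonov_convergence
    {X Y : Type*} [NormedAddCommGroup X] [InnerProductSpace ℝ X] [CompleteSpace X]
    [NormedAddCommGroup Y] [InnerProductSpace ℝ Y] [CompleteSpace Y]
    (T : X →L[ℝ] Y) (y : Y) (xdag : X) (C C' : ℝ) (hC : 0 ≤ C) (hC' : 0 ≤ C')
    (hsol : T xdag = y) (hmin : ∀ x, T x = y → ‖xdag‖ ≤ ‖x‖)
    (δ α : ℕ → ℝ) (hδpos : ∀ n, 0 ≤ δ n) (hαpos : ∀ n, 0 < α n)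
    (hδ0 : Tendsto δ atTop (nhds 0)) (hα0 : Tendsto α atTop (nhds 0))
    (hrate : Tendsto (fun n => δ n ^ 2 / α n) atTop (nhds 0))
    (Tn : ℕ → X →L[ℝ] Y) (yn : ℕ → Y)
    (hTT : ∀ n, ‖T xdag - Tn n xdag‖ ≤ C * δ n)
    (hop : ∀ n, ‖T - Tn n‖ ≤ C * δ n)
    (hy : ∀ n, ‖y - yn n‖ ≤ C' * δ n)
    (xn : ℕ → X)
    (hxn : ∀ n x, ‖Tn n (xn n) - yn n‖ ^ 2 + α n * ‖xn n‖ ^ 2 ≤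
      ‖Tn n x - yn n‖ ^ 2 + α n * ‖x‖ ^ 2) :
    Tendsto xn atTop (nhds xdag) :=
  tikhonov_convergence_general T y xdag C C' hsol hmin δ α hαpos hδ0 hα0 hrate Tn yn hTT hop hy xn
    hxn
end

section
/- Let Ω be the torus, and let φ be smooth and periodic on Ω × (0,T), with b > 0 strictly positive and C¹. Suppose (φ, μ) solves the Cahn-Hilliard system. Then for every smooth periodic test function w : ℝ → ℝ and every t, the identity ∫_Ω f'(φ)w(φ)|∇φ|² dx = ∫_Ω w(φ)γ∇Δφ·∇φ dx - ∫_Ω (∫₀^φ w(s)/b(s) ds) ∂ₜφ dx holds. -/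
open MeasureTheory Filter RealInnerProductSpace

-- HELPERS
lemma inner_grad {d : ℕ} (f : EuclideanSpace ℝ (Fin d) → ℝ) (x v : EuclideanSpace ℝ (Fin d)) :
    ⟪grad f x, v⟫ = fderiv ℝ f x v := by
  simp [grad, gradient, InnerProductSpace.toDual_symm_apply]

lemma grad_apply {d : ℕ} (f : EuclideanSpace ℝ (Fin d) → ℝ) (x : EuclideanSpace ℝ (Fin d))
    (i : Fin d) : grad f x i = fderiv ℝ f x (EuclideanSpace.single i 1) := by
  rw [← inner_grad]
  simp [EuclideanSpace.inner_single_right]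

lemma divg_eq_sum {d : ℕ} (V : EuclideanSpace ℝ (Fin d) → EuclideanSpace ℝ (Fin d))
    (x : EuclideanSpace ℝ (Fin d)) :
    divg V x = ∑ i, fderiv ℝ V x (EuclideanSpace.single i 1) i := by
  rw [divg, LinearMap.trace_eq_matrix_trace ℝ (PiLp.basisFun 2 ℝ (Fin d)), Matrix.trace]
  simp [Matrix.diag, LinearMap.toMatrix_apply, PiLp.basisFun_apply, PiLp.basisFun_repr]

lemma divg_continuous {d : ℕ} {V : EuclideanSpace ℝ (Fin d) → EuclideanSpace ℝ (Fin d)}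
    (hV : ContDiff ℝ 1 V) : Continuous (divg V) := by
  have h1 : Continuous (fderiv ℝ V) := hV.continuous_fderiv one_ne_zero
  have : Continuous fun x => ∑ i, fderiv ℝ V x (EuclideanSpace.single i 1) i := by
    refine continuous_finset_sum _ fun i _ => ?_
    exact (EuclideanSpace.proj i).continuous.comp
      ((ContinuousLinearMap.apply ℝ _ (EuclideanSpace.single i 1)).continuous.comp h1)
  simpa [funext (divg_eq_sum V)] using this

lemma contDiff_grad {d : ℕ} {f : EuclideanSpace ℝ (Fin d) → ℝ} (hf : ContDiff ℝ (⊤ : ℕ∞) f) :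
    ContDiff ℝ (⊤ : ℕ∞) (grad f) := by
  have h1 : ContDiff ℝ (⊤ : ℕ∞) (fderiv ℝ f) := hf.fderiv_right (by simp)
  exact (InnerProductSpace.toDual ℝ (EuclideanSpace ℝ (Fin d))).symm
    |>.toContinuousLinearEquiv.toContinuousLinearMap.contDiff.comp h1

lemma contDiff_divg {d : ℕ} {V : EuclideanSpace ℝ (Fin d) → EuclideanSpace ℝ (Fin d)}
    (hV : ContDiff ℝ (⊤ : ℕ∞) V) : ContDiff ℝ (⊤ : ℕ∞) (divg V) := by
  have h1 : ContDiff ℝ (⊤ : ℕ∞) (fderiv ℝ V) := hV.fderiv_right (by simp)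
  have : ContDiff ℝ (⊤ : ℕ∞) fun x => ∑ i, fderiv ℝ V x (EuclideanSpace.single i 1) i := by
    refine ContDiff.sum fun i _ => ?_
    have h2 : ContDiff ℝ (⊤ : ℕ∞) fun x => fderiv ℝ V x (EuclideanSpace.single i 1) :=
      h1.clm_apply contDiff_const
    exact (EuclideanSpace.proj i).contDiff.comp h2
  simpa [funext (divg_eq_sum V)] using this

lemma fderiv_shift {E F : Type*} [NormedAddCommGroup E] [NormedSpace ℝ E]
    [NormedAddCommGroup F] [NormedSpace ℝ F] (f : E → F) (c x : E)
    (hf : DifferentiableAt ℝ f (x + c)) :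
    fderiv ℝ (fun y => f (y + c)) x = fderiv ℝ f (x + c) := by
  have h2 : HasFDerivAt (fun y : E => y + c) (ContinuousLinearMap.id ℝ E) x :=
    (hasFDerivAt_id x).add_const c
  have := hf.hasFDerivAt.comp x h2
  simpa [Function.comp_def] using this.fderiv

lemma fderiv_periodic {E F : Type*} [NormedAddCommGroup E] [NormedSpace ℝ E]
    [NormedAddCommGroup F] [NormedSpace ℝ F] {f : E → F} (hf : Differentiable ℝ f)
    (c : E) (hper : ∀ y, f (y + c) = f y) (x : E) :
    fderiv ℝ f (x + c) = fderiv ℝ f x := by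
  have h1 : (fun y => f (y + c)) = f := funext hper
  calc fderiv ℝ f (x + c) = fderiv ℝ (fun y => f (y + c)) x :=
        (fderiv_shift f c x (hf _)).symm
    _ = fderiv ℝ f x := by rw [h1]

lemma grad_periodic {d : ℕ} {f : EuclideanSpace ℝ (Fin d) → ℝ} (hf : Differentiable ℝ f)
    (c : EuclideanSpace ℝ (Fin d)) (hper : ∀ y, f (y + c) = f y) (x : EuclideanSpace ℝ (Fin d)) :
    grad f (x + c) = grad f x := by
  unfold grad gradient
  rw [fderiv_periodic hf c hper x]

lemma divg_periodic {d : ℕ} {V : EuclideanSpace ℝ (Fin d) → EuclideanSpace ℝ (Fin d)}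
    (hV : Differentiable ℝ V) (c : EuclideanSpace ℝ (Fin d)) (hper : ∀ y, V (y + c) = V y)
    (x : EuclideanSpace ℝ (Fin d)) : divg V (x + c) = divg V x := by
  unfold divg
  rw [fderiv_periodic hV c hper x]

lemma divg_smul {d : ℕ} {u : EuclideanSpace ℝ (Fin d) → ℝ}
    {F : EuclideanSpace ℝ (Fin d) → EuclideanSpace ℝ (Fin d)} {x : EuclideanSpace ℝ (Fin d)}
    (hu : DifferentiableAt ℝ u x) (hF : DifferentiableAt ℝ F x) :
    divg (fun y => u y • F y) x = ⟪grad u x, F x⟫ + u x * divg F x := by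
  rw [divg_eq_sum, divg_eq_sum, fderiv_fun_smul hu hF]
  have hinner : ⟪grad u x, F x⟫ = ∑ i, grad u x i * F x i := by
    simp [PiLp.inner_apply, RCLike.inner_apply, map_one, RingHom.id_apply, mul_comm]
  simp only [ContinuousLinearMap.add_apply, ContinuousLinearMap.coe_smul',
    Pi.smul_apply, ContinuousLinearMap.smulRight_apply, PiLp.add_apply, PiLp.smul_apply,
    smul_eq_mul]
  rw [Finset.sum_add_distrib, hinner, ← Finset.mul_sum]
  rw [add_comm]
  congr 1
  exact Finset.sum_congr rfl fun i _ => by rw [grad_apply]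

lemma torus_divergence {d : ℕ} (hd : d ≠ 0)
    (G : EuclideanSpace ℝ (Fin d) → EuclideanSpace ℝ (Fin d))
    (hG : ContDiff ℝ 1 G)
    (hper : ∀ (x : EuclideanSpace ℝ (Fin d)) (k : Fin d → ℤ),
      G (x + (EuclideanSpace.equiv (Fin d) ℝ).symm (fun i => (k i : ℝ))) = G x) :
    ∫ x in Box d, divg G x = 0 := by
  obtain ⟨n, rfl⟩ : ∃ n, d = n + 1 := ⟨d - 1, (Nat.succ_pred_eq_of_ne_zero hd).symm⟩
  set L : EuclideanSpace ℝ (Fin (n+1)) ≃L[ℝ] (Fin (n+1) → ℝ) :=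
    EuclideanSpace.equiv (Fin (n+1)) ℝ with hL
  have hbox : Box (n+1) = ((MeasurableEquiv.toLp 2 (Fin (n+1) → ℝ)).symm) ⁻¹' Set.Icc 0 1 := by
    ext x
    simp only [Box, Set.mem_setOf_eq, Set.mem_preimage, Set.mem_Icc, Pi.le_def]
    constructor
    · intro h; exact ⟨fun i => (h i).1, fun i => (h i).2⟩
    · intro h i; exact ⟨h.1 i, h.2 i⟩
  have hmp := EuclideanSpace.volume_preserving_symm_measurableEquiv_toLp (Fin (n+1))
  have hemb : MeasurableEmbedding ((MeasurableEquiv.toLp 2 (Fin (n+1) → ℝ)).symm) :=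
    ((MeasurableEquiv.toLp 2 (Fin (n+1) → ℝ)).symm).measurableEmbedding
  have htrans : ∫ x in Box (n+1), divg G x =
      ∫ y in Set.Icc (0 : Fin (n+1) → ℝ) 1, divg G (L.symm y) := by
    rw [hbox]
    rw [← hmp.setIntegral_preimage_emb hemb (fun y => divg G (L.symm y)) (Set.Icc 0 1)]
    congr 1
  rw [htrans]
  classical
  set f : (Fin (n+1) → ℝ) → (Fin (n+1) → ℝ) := fun y => L (G (L.symm y)) with hf
  set f' : (Fin (n+1) → ℝ) → (Fin (n+1) → ℝ) →L[ℝ] (Fin (n+1) → ℝ) :=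
    fun y => ((L.toContinuousLinearMap.comp (fderiv ℝ G (L.symm y))).comp
      L.symm.toContinuousLinearMap) with hf'
  have hder : ∀ y, HasFDerivAt f (f' y) y := by
    intro y
    exact (L.toContinuousLinearMap.hasFDerivAt.comp _
      (((hG.differentiable one_ne_zero _).hasFDerivAt).comp _ L.symm.hasFDerivAt))
  have hsum : ∀ y, (∑ i, f' y (Pi.single i 1) i) = divg G (L.symm y) := by
    intro y
    rw [divg_eq_sum]
    rfl
  have hcont : Continuous f := L.continuous.comp ((hG.continuous).comp L.symm.continuous)
  have Hi : IntegrableOn (fun y => ∑ i, f' y (Pi.single i 1) i)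
      (Set.Icc (0 : Fin (n+1) → ℝ) 1) := by
    have : Continuous fun y => divg G (L.symm y) := (divg_continuous hG).comp L.symm.continuous
    exact (this.integrableOn_Icc).congr_fun (fun y _ => (hsum y).symm) measurableSet_Icc
  have H := integral_divergence_of_hasFDerivAt_off_countable (n := n)
    (0 : Fin (n+1) → ℝ) 1 (by intro i; norm_num) f f' ∅ Set.countable_empty
    hcont.continuousOn (fun x _ => hder x) Hi
  have hfper : ∀ (u : Fin (n+1) → ℝ) (i : Fin (n+1)), f (u + Pi.single i 1) = f u := by
    intro u i
    have h1 : L.symm (u + Pi.single i 1) =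
        L.symm u + (EuclideanSpace.equiv (Fin (n+1)) ℝ).symm
          (fun j => (((Pi.single i 1 : Fin (n+1) → ℤ) j : ℤ) : ℝ)) := by
      have : (fun j => (((Pi.single i 1 : Fin (n+1) → ℤ) j : ℤ) : ℝ)) = Pi.single i (1:ℝ) := by
        funext j
        by_cases h : j = i <;> simp [Pi.single_apply, h]
      rw [this, map_add]
    simp only [hf, h1]
    exact congrArg L (hper _ _)
  have hface : ∀ (i : Fin (n+1)) (x : Fin n → ℝ),
      f (Fin.insertNth (α := fun _ => ℝ) i ((1 : Fin (n+1) → ℝ) i) x)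
        = f (Fin.insertNth (α := fun _ => ℝ) i ((0 : Fin (n+1) → ℝ) i) x) := by
    intro i x
    have h2 : Fin.insertNth (α := fun _ => ℝ) i ((1 : Fin (n+1) → ℝ) i) x
        = Fin.insertNth (α := fun _ => ℝ) i ((0 : Fin (n+1) → ℝ) i) x + Pi.single i 1 := by
      funext j
      rcases eq_or_ne j i with rfl | h
      · simp [Fin.insertNth_apply_same]
      · rcases Fin.exists_succAbove_eq h with ⟨m, rfl⟩
        simp [Fin.insertNth_apply_succAbove, Pi.single_apply, (Fin.succAbove_ne i m)]
    rw [h2, hfper]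
  calc ∫ y in Set.Icc (0 : Fin (n+1) → ℝ) 1, divg G (L.symm y)
      = ∫ y in Set.Icc (0 : Fin (n+1) → ℝ) 1, ∑ i, f' y (Pi.single i 1) i :=
        setIntegral_congr_fun measurableSet_Icc (fun y _ => (hsum y).symm)
    _ = 0 := by
        rw [H]
        refine Finset.sum_eq_zero fun i _ => ?_
        rw [sub_eq_zero]
        exact setIntegral_congr_fun measurableSet_Icc (fun x _ => by rw [hface i x])

-- main aux lemma (appended to helpers+torus file for testing)
lemma main_aux {d : ℕ} (hdne : d ≠ 0) (γ : ℝ)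
    (b f w : ℝ → ℝ) (hb : ContDiff ℝ 1 b) (hbpos : ∀ s, 0 < b s) (hf : ContDiff ℝ 1 f)
    (hw : ContDiff ℝ (⊤ : ℕ∞) w)
    (g m : EuclideanSpace ℝ (Fin d) → ℝ)
    (hg : ContDiff ℝ (⊤ : ℕ∞) g) (hm : ContDiff ℝ (⊤ : ℕ∞) m)
    (hgper : IsPeriodic g) (hmper : IsPeriodic m)
    (hm_eq : ∀ x, m x = -γ * lap g x + f (g x))
    (dtφ : EuclideanSpace ℝ (Fin d) → ℝ)
    (hdt : ∀ x, dtφ x = divg (fun y => b (g y) • grad m y) x) :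
    ∫ x in Box d, deriv f (g x) * w (g x) * ‖grad g x‖ ^ 2 =
      (∫ x in Box d, w (g x) * γ * ⟪grad (lap g) x, grad g x⟫) -
      ∫ x in Box d, (∫ s in (0:ℝ)..(g x), w s / b s) * dtφ x := by
  classical
  have hgd : Differentiable ℝ g := hg.differentiable (by simp)
  have hmd : Differentiable ℝ m := hm.differentiable (by simp)
  have hgradg : ContDiff ℝ (⊤ : ℕ∞) (grad g) := contDiff_grad hg
  have hgradm : ContDiff ℝ (⊤ : ℕ∞) (grad m) := contDiff_grad hm
  have hlapg : ContDiff ℝ (⊤ : ℕ∞) (lap g) := by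
    have : lap g = divg (grad g) := rfl
    rw [this]; exact contDiff_divg hgradg
  have hgradlap : ContDiff ℝ (⊤ : ℕ∞) (grad (lap g)) := contDiff_grad hlapg
  have hwc : Continuous w := hw.continuous
  have hwb : Continuous fun s => w s / b s := hwc.div hb.continuous fun s => (hbpos s).ne'
  set Vb : ℝ → ℝ := fun r => ∫ s in (0:ℝ)..r, w s / b s with hVb_def
  have hVd : ∀ r, HasDerivAt Vb (w r / b r) r := fun r =>
    (hwb.integral_hasStrictDerivAt 0 r).hasDerivAt
  have hV1 : ContDiff ℝ 1 Vb := by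
    rw [contDiff_one_iff_deriv]
    refine ⟨fun r => (hVd r).differentiableAt, ?_⟩
    have : deriv Vb = fun r => w r / b r := funext fun r => (hVd r).deriv
    rw [this]; exact hwb
  set v : EuclideanSpace ℝ (Fin d) → ℝ := fun x => Vb (g x) with hv_def
  set Fl : EuclideanSpace ℝ (Fin d) → EuclideanSpace ℝ (Fin d) :=
    fun y => b (g y) • grad m y with hFl_def
  set G : EuclideanSpace ℝ (Fin d) → EuclideanSpace ℝ (Fin d) :=
    fun x => v x • Fl x with hG_def
  have hv1 : ContDiff ℝ 1 v := hV1.comp (hg.of_le (by simp))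
  have hF1 : ContDiff ℝ 1 Fl := (hb.comp (hg.of_le (by simp))).smul (hgradm.of_le (by simp))
  have hG1 : ContDiff ℝ 1 G := hv1.smul hF1
  -- periodicity of G
  have hGper : ∀ (x : EuclideanSpace ℝ (Fin d)) (k : Fin d → ℤ),
      G (x + (EuclideanSpace.equiv (Fin d) ℝ).symm (fun i => (k i : ℝ))) = G x := by
    intro x k
    set c : EuclideanSpace ℝ (Fin d) :=
      (EuclideanSpace.equiv (Fin d) ℝ).symm (fun i => (k i : ℝ)) with hc_def
    have hgp : ∀ y, g (y + c) = g y := fun y => hgper y k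
    have hmp : ∀ y, m (y + c) = m y := fun y => hmper y k
    have h1 : grad m (x + c) = grad m x := grad_periodic hmd c hmp x
    simp only [hG_def, hFl_def, hv_def, hgp x, h1]
  -- pointwise: inner products
  have hinner_m : ∀ x, ⟪grad m x, grad g x⟫
      = -γ * ⟪grad (lap g) x, grad g x⟫ + deriv f (g x) * ‖grad g x‖ ^ 2 := by
    intro x
    have dlap : DifferentiableAt ℝ (lap g) x := hlapg.differentiable (by simp) x
    have hfg : HasFDerivAt (fun y => f (g y)) (deriv f (g x) • fderiv ℝ g x) x :=
      ((hf.differentiable one_ne_zero (g x)).hasDerivAt).comp_hasFDerivAt x (hgd x).hasFDerivAt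
    have d1 : DifferentiableAt ℝ (fun y => -γ * lap g y) x := dlap.const_mul _
    have hmeq : m = fun y => -γ * lap g y + f (g y) := funext hm_eq
    rw [inner_grad, hmeq, fderiv_fun_add d1 hfg.differentiableAt, ContinuousLinearMap.add_apply,
      fderiv_const_mul dlap, hfg.fderiv]
    simp only [ContinuousLinearMap.smul_apply, smul_eq_mul]
    rw [← inner_grad, ← inner_grad, real_inner_self_eq_norm_sq]
  have hinner_v : ∀ x, ⟪grad v x, Fl x⟫ = w (g x) * ⟪grad m x, grad g x⟫ := by
    intro x
    have hvx : HasFDerivAt v ((w (g x) / b (g x)) • fderiv ℝ g x) x :=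
      (hVd (g x)).comp_hasFDerivAt x (hgd x).hasFDerivAt
    rw [inner_grad, hvx.fderiv]
    simp only [ContinuousLinearMap.smul_apply, smul_eq_mul]
    rw [← inner_grad]
    have h2 : ⟪grad g x, Fl x⟫ = b (g x) * ⟪grad g x, grad m x⟫ := by
      simp only [hFl_def]
      rw [real_inner_smul_right]
    rw [h2, real_inner_comm (grad m x)]
    field_simp [(hbpos (g x)).ne']
  -- product rule pointwise
  have hdivG : ∀ x, divg G x = w (g x) * ⟪grad m x, grad g x⟫ + v x * divg Fl x := by
    intro x
    have h0 : divg G x = ⟪grad v x, Fl x⟫ + v x * divg Fl x :=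
      divg_smul (hv1.differentiable one_ne_zero x) (hF1.differentiable one_ne_zero x)
    rw [h0, hinner_v x]
  -- Box facts
  have hbox : Box d = (EuclideanSpace.equiv (Fin d) ℝ) ⁻¹' Set.Icc 0 1 := by
    ext x
    simp only [Box, Set.mem_setOf_eq, Set.mem_preimage, Set.mem_Icc, Pi.le_def]
    constructor
    · intro h; exact ⟨fun i => (h i).1, fun i => (h i).2⟩
    · intro h i; exact ⟨h.1 i, h.2 i⟩
  have hBoxC : IsCompact (Box d) := by
    rw [hbox]
    exact (EuclideanSpace.equiv (Fin d) ℝ).toHomeomorph.isCompact_preimage.2 isCompact_Icc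
  have hBoxM : MeasurableSet (Box d) := hBoxC.isClosed.measurableSet
  -- integrability
  have iB : IntegrableOn (fun x => w (g x) * γ * ⟪grad (lap g) x, grad g x⟫) (Box d) :=
    (((hwc.comp hg.continuous).mul continuous_const).mul
      (hgradlap.continuous.inner hgradg.continuous)).continuousOn.integrableOn_compact hBoxC
  have iC : IntegrableOn (fun x => w (g x) * ⟪grad m x, grad g x⟫) (Box d) :=
    ((hwc.comp hg.continuous).mul
      (hgradm.continuous.inner hgradg.continuous)).continuousOn.integrableOn_compact hBoxC
  have iD : IntegrableOn (fun x => v x * divg Fl x) (Box d) :=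
    (hv1.continuous.mul (divg_continuous hF1)).continuousOn.integrableOn_compact hBoxC
  -- divergence theorem
  have I0 : ∫ x in Box d, divg G x = 0 := torus_divergence hdne G hG1 hGper
  have I1 : ∫ x in Box d, (w (g x) * ⟪grad m x, grad g x⟫ + v x * divg Fl x) = 0 := by
    rw [← I0]
    exact setIntegral_congr_fun hBoxM fun x _ => (hdivG x).symm
  have I2 : (∫ x in Box d, w (g x) * ⟪grad m x, grad g x⟫)
      + ∫ x in Box d, v x * divg Fl x = 0 := by
    rw [← integral_add iC iD]
    exact I1
  have hlast : ∫ x in Box d, (∫ s in (0:ℝ)..(g x), w s / b s) * dtφ x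
      = ∫ x in Box d, v x * divg Fl x := by
    refine setIntegral_congr_fun hBoxM fun x _ => ?_
    rw [hdt x]
  calc ∫ x in Box d, deriv f (g x) * w (g x) * ‖grad g x‖ ^ 2
      = ∫ x in Box d, (w (g x) * γ * ⟪grad (lap g) x, grad g x⟫
          + w (g x) * ⟪grad m x, grad g x⟫) := by
        refine setIntegral_congr_fun hBoxM fun x _ => ?_
        rw [hinner_m x]
        ring
    _ = (∫ x in Box d, w (g x) * γ * ⟪grad (lap g) x, grad g x⟫)
          + ∫ x in Box d, w (g x) * ⟪grad m x, grad g x⟫ := integral_add iB iC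
    _ = (∫ x in Box d, w (g x) * γ * ⟪grad (lap g) x, grad g x⟫)
          - ∫ x in Box d, (∫ s in (0:ℝ)..(g x), w s / b s) * dtφ x := by
        rw [hlast]
        linarith [I2]


/-- the variational identity obtained from the Cahn-Hilliard system by
testing with `v = ∫₀^φ w(s)/b(s) ds`:
`∫_Ω f'(φ)w(φ)|∇φ|² dx = ∫_Ω w(φ)γ∇Δφ·∇φ dx - ∫_Ω (∫₀^φ w(s)/b(s) ds) ∂ₜφ dx`. -/
theorem cahn_hilliard_variational_identity
    {d : ℕ} (hd : d = 1 ∨ d = 2 ∨ d = 3)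
    (γ T : ℝ) (hγ : 0 < γ)
    (b f : ℝ → ℝ) (hb : ContDiff ℝ 1 b) (hbpos : ∀ s, 0 < b s) (hf : ContDiff ℝ 1 f)
    (φ μ : EuclideanSpace ℝ (Fin d) → ℝ → ℝ)
    (hφx : ∀ t, ContDiff ℝ (⊤ : ℕ∞) (fun x => φ x t)) (hφt : ∀ x, ContDiff ℝ (⊤ : ℕ∞) (φ x))
    (hμx : ∀ t, ContDiff ℝ (⊤ : ℕ∞) (fun x => μ x t))
    (hφper : ∀ t, IsPeriodic (fun x => φ x t)) (hμper : ∀ t, IsPeriodic (fun x => μ x t))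
    (h1 : ∀ x t, t ∈ Set.Ioo (0:ℝ) T →
      deriv (φ x) t = divg (fun y => b (φ y t) • grad (fun y => μ y t) y) x)
    (h2 : ∀ x t, t ∈ Set.Ioo (0:ℝ) T →
      μ x t = -γ * lap (fun y => φ y t) x + f (φ x t)) :
    ∀ w : ℝ → ℝ, ContDiff ℝ (⊤ : ℕ∞) w → ∀ t ∈ Set.Ioo (0:ℝ) T,
      ∫ x in Box d, deriv f (φ x t) * w (φ x t) * ‖grad (fun y => φ y t) x‖ ^ 2 =
        (∫ x in Box d,
          w (φ x t) * γ * ⟪grad (lap (fun y => φ y t)) x, grad (fun y => φ y t) x⟫) -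
        ∫ x in Box d, (∫ s in (0:ℝ)..(φ x t), w s / b s) * deriv (φ x) t := by
  intro w hw t ht
  have hdne : d ≠ 0 := by rcases hd with h | h | h <;> omega
  have h1t : ∀ x, deriv (φ x) t
      = divg (fun y => b (φ y t) • grad (fun y => μ y t) y) x := fun x => h1 x t ht
  have h2t : ∀ x, μ x t = -γ * lap (fun y => φ y t) x + f (φ x t) := fun x => h2 x t ht
  exact main_aux hdne γ b f w hb hbpos hf hw (fun x => φ x t) (fun x => μ x t)
    (hφx t) (hμx t) (hφper t) (hμper t) h2t (fun x => deriv (φ x) t) h1t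
end
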